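/- arXiv:2001.10476 — 4 statements merged into one kernel-verified Lean document; each statement's English description precedes it below -/
import Mathlib

section
/- Let α ≥ 0 and 2 + 2α < p < 2(2+α). Then the following three statements are equivalent: (a) B((2+α)/p, 1−(2+α)/p) · H_{α,p}(0) − ∫₀¹ ψ_{α,p}(t) K_{α,p}(0,t) dt ≤ 0; (b) B((2+α)/p, 1−(2+α)/p) · [½ B((p−2α−2)/2, α+1) − 1/(2(α+1))] − ½ ∫₀¹ ψ_{α,p}(t) B_{t⁴}((p−2α−2)/2, α+1) dt ≤ 0; (c) ∫₀¹ I_t((2+α)/p, 1−(2+α)/p) t^{2p−4α−5}(1−t⁴)^α dt − 1/(4(α+1)) ≤ 0. -/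
/-!
Put `c = (p - 2α - 2)/2` and `x = (2 + α)/p`. Expanding `(1 - s)^α` in its binomial series and
integrating termwise gives `B_T(c, α+1) = Σ_k binom(α,k) (-1)^k T^(c+k)/(c+k)` for `0 ≤ T ≤ 1`;
the exchange is legitimate up to `T = 1` because `k |binom(α,k)|` stays bounded when `α ≥ 0`.
So the series in `H_{α,p}(0)` and `K_{α,p}(0,t)` are `½ B(c, α+1)` and `½ B_{t⁴}(c, α+1)`, which is
(a) ⇔ (b). For (b) ⇔ (c), `ψ_{α,p}` is the derivative of `t ↦ B_t(x, 1-x)`, and integration by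
parts against `t ↦ B_{t⁴}(c, α+1)` gives
`∫₀¹ ψ_{α,p}(t) B_{t⁴}(c, α+1) dt = B(x, 1-x) B(c, α+1) - 4 ∫₀¹ B_t(x, 1-x) t^(4c-1) (1-t⁴)^α dt`,
after which the left side of (b) is `2 B(x, 1-x)` times the left side of (c).
-/

open MeasureTheory intervalIntegral

/-- The Beta function `B(x,y) = ∫₀¹ t^(x-1) (1-t)^(y-1) dt`. -/
noncomputable def betaFn (x y : ℝ) : ℝ :=
  ∫ t in (0:ℝ)..1, t ^ (x - 1) * (1 - t) ^ (y - 1)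

/-- The incomplete Beta function `B_T(x,y) = ∫₀^T s^(x-1) (1-s)^(y-1) ds`. -/
noncomputable def betaInc (T x y : ℝ) : ℝ :=
  ∫ s in (0:ℝ)..T, s ^ (x - 1) * (1 - s) ^ (y - 1)

/-- The regularized incomplete Beta function `I_T(x,y) = B_T(x,y)/B(x,y)`. -/
noncomputable def betaReg (T x y : ℝ) : ℝ := betaInc T x y / betaFn x y

/-- Generalized binomial coefficient `binom(α,k) = α(α-1)⋯(α-k+1)/k!`. -/
noncomputable def gBinom (α : ℝ) (k : ℕ) : ℝ :=
  (∏ i ∈ Finset.range k, (α - i)) / (Nat.factorial k)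

/-- `ψ_{α,p}(t) = t^((2+α)/p - 1) (1-t)^(-(2+α)/p)`. -/
noncomputable def psiFn (α p t : ℝ) : ℝ :=
  t ^ ((2 + α) / p - 1) * (1 - t) ^ (-((2 + α) / p))

/-- `H_{α,p}(s) = Σ_k binom(α,k)(-1)^k/(p-2α-2+2k) - (1/(2(α+1)))(1-s⁴)^(α+1)`. -/
noncomputable def Hfun (α p s : ℝ) : ℝ :=
  (∑' k : ℕ, gBinom α k * (-1) ^ k / (p - 2 * α - 2 + 2 * k)) -
    1 / (2 * (α + 1)) * (1 - s ^ 4) ^ (α + 1)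

/-- `K_{α,p}(s,t) = Σ_k binom(α,k)(-1)^k max{s²,t²}^(p-2α-2+2k)/(p-2α-2+2k)`. -/
noncomputable def Kfun (α p s t : ℝ) : ℝ :=
  ∑' k : ℕ, gBinom α k * (-1) ^ k * (max (s ^ 2) (t ^ 2)) ^ (p - 2 * α - 2 + 2 * (k : ℝ)) /
    (p - 2 * α - 2 + 2 * k)

/-- Condition (C): `∫₀¹ I_t((2+α)/p, 1-(2+α)/p) t^(2p-4α-5)(1-t⁴)^α dt - 1/(4(α+1)) ≤ 0`. -/
noncomputable def condC (α p : ℝ) : Prop :=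
  (∫ t in (0:ℝ)..1,
      betaReg t ((2 + α) / p) (1 - (2 + α) / p) * t ^ (2 * p - 4 * α - 5) * (1 - t ^ 4) ^ α)
    - 1 / (4 * (α + 1)) ≤ 0

/-- Lebesgue area measure on `ℂ` normalized so that the unit disk has measure 1. -/
noncomputable def normalizedArea : Measure ℂ := (ENNReal.ofReal Real.pi)⁻¹ • volume

/-- The (p-th power of the) weighted Bergman norm:
`‖f‖_{A^p_α} = ((α+1) ∫_𝔻 |f(w)|^p (1-|w|²)^α dA(w))^(1/p)`. -/
noncomputable def bergmanNorm (α p : ℝ) (f : ℂ → ℂ) : ℝ :=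
  ((α + 1) * ∫ w in Metric.ball (0 : ℂ) 1,
      ‖f w‖ ^ p * (1 - ‖w‖ ^ 2) ^ α ∂normalizedArea) ^ (1 / p)

/-- Membership in the weighted Bergman space `A^p_α`: `f` is analytic on the unit disk and has
finite Bergman norm (the defining integrand is integrable). -/
def MemBergman (α p : ℝ) (f : ℂ → ℂ) : Prop :=
  DifferentiableOn ℂ f (Metric.ball (0 : ℂ) 1) ∧
  IntegrableOn (fun w => ‖f w‖ ^ p * (1 - ‖w‖ ^ 2) ^ α)
    (Metric.ball (0 : ℂ) 1) normalizedArea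

/-- The Hilbert matrix operator `ℋ(f)(z) = ∫₀¹ f(t/((t-1)z+1)) / ((t-1)z+1) dt`. -/
noncomputable def hilbertOp (f : ℂ → ℂ) (z : ℂ) : ℂ :=
  ∫ t in (0:ℝ)..1, f ((t : ℂ) / (((t : ℂ) - 1) * z + 1)) / (((t : ℂ) - 1) * z + 1)

/-- The operator norm of the Hilbert matrix operator on `A^p_α`:
`sup { ‖ℋ f‖_{A^p_α} : f ∈ A^p_α, ‖f‖_{A^p_α} ≤ 1 }`. -/
noncomputable def hilbertOpNorm (α p : ℝ) : ℝ :=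
  sSup {c : ℝ | ∃ f : ℂ → ℂ, MemBergman α p f ∧ bergmanNorm α p f ≤ 1 ∧
    c = bergmanNorm α p (hilbertOp f)}

theorem gBinom_eq_ringChoose (α : ℝ) (k : ℕ) : gBinom α k = Ring.choose α k := by
  rw [Ring.choose_eq_smul, gBinom, ← descPochhammer_eval_eq_prod_range, smul_eq_mul,
    div_eq_inv_mul, ← Polynomial.aeval_eq_smeval, Polynomial.aeval_def,
    Polynomial.eval₂_eq_eval_map, descPochhammer_map]

theorem hasSum_gBinom_mul_pow (α : ℝ) {x : ℝ} (hx : |x| < 1) :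
    HasSum (fun k : ℕ => gBinom α k * x ^ k) ((1 + x) ^ α) := by
  have := Real.one_add_rpow_hasFPowerSeriesOnBall_zero (a := α) |>.hasSum
    (y := x) (by simpa [edist_dist, Real.dist_eq] using hx)
  simpa [gBinom_eq_ringChoose, binomialSeries, FormalMultilinearSeries.ofScalars] using this

theorem intervalIntegrable_betaIntegrand {x y : ℝ} (hx : 0 < x) (hy : 0 < y) :
    IntervalIntegrable (fun t : ℝ => t ^ (x - 1) * (1 - t) ^ (y - 1)) volume 0 1 := by
  have := (Complex.betaIntegral_convergent (u := x) (v := y) (by simpa) (by simpa)).norm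
  rw [intervalIntegrable_iff_integrableOn_Ioo_of_le zero_le_one] at this ⊢
  refine this.congr_fun (fun t ht => ?_) measurableSet_Ioo
  have h1 : (1 : ℂ) - t = ((1 - t : ℝ) : ℂ) := by push_cast; ring
  simp only [norm_mul, h1, Complex.norm_cpow_eq_rpow_re_of_pos ht.1,
    Complex.norm_cpow_eq_rpow_re_of_pos (sub_pos.2 ht.2)]
  simp

theorem gBinom_succ_mul (α : ℝ) (k : ℕ) :
    gBinom α (k + 1) * (k + 1) = gBinom α k * (α - k) := by
  have hk : (k.factorial : ℝ) ≠ 0 := Nat.cast_ne_zero.2 k.factorial_ne_zero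
  rw [gBinom, gBinom, Finset.prod_range_succ, Nat.factorial_succ]
  push_cast
  field_simp

theorem exists_natCast_mul_abs_gBinom_le {α : ℝ} (hα : 0 ≤ α) :
    ∃ C, ∀ k : ℕ, k * |gBinom α k| ≤ C := by
  set f : ℕ → ℝ := fun k => k * |gBinom α k|
  -- for `k ≥ α` the recursion reads `(k + 1) |b (k + 1)| = (k - α) |b k| ≤ k |b k|`
  have hf : ∀ k ≥ ⌈α⌉₊, f (k + 1) ≤ f k := by
    intro k hk
    have hαk : α ≤ k := Nat.ceil_le.1 hk
    have h := congrArg abs (gBinom_succ_mul α k)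
    rw [abs_mul, abs_mul, abs_of_nonpos (sub_nonpos.2 hαk),
      abs_of_pos (show (0 : ℝ) < k + 1 by positivity)] at h
    simp only [f]
    push_cast
    nlinarith [abs_nonneg (gBinom α k)]
  have hanti := antitoneOn_nat_Ici_of_succ_le hf
  refine ⟨∑ j ∈ Finset.range (⌈α⌉₊ + 1), f j, fun k => ?_⟩
  have hle : ∀ j ≤ ⌈α⌉₊, f j ≤ ∑ j ∈ Finset.range (⌈α⌉₊ + 1), f j := fun j hj =>
    Finset.single_le_sum (f := f) (fun i _ => by positivity) (Finset.mem_range_succ_iff.2 hj)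
  rcases le_total k ⌈α⌉₊ with hk | hk
  · exact hle k hk
  · exact (hanti (Set.mem_Ici.2 le_rfl) (Set.mem_Ici.2 hk) hk).trans (hle _ le_rfl)

theorem summable_abs_gBinom_div {α c : ℝ} (hα : 0 ≤ α) (hc : 0 < c) :
    Summable fun k : ℕ => |gBinom α k| / (c + k) := by
  obtain ⟨C, hC⟩ := exists_natCast_mul_abs_gBinom_le hα
  refine (summable_nat_add_iff 1).1 ?_
  have hsq : Summable fun k : ℕ => C * (1 / ((k + 1 : ℕ) : ℝ) ^ 2) :=
    ((summable_nat_add_iff 1).2 (Real.summable_one_div_nat_pow.2 one_lt_two)).mul_left C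
  refine Summable.of_nonneg_of_le (fun k => by positivity) (fun k => ?_) hsq
  have hk : (0 : ℝ) < (k + 1 : ℕ) := by positivity
  have hb : |gBinom α (k + 1)| ≤ C / (k + 1 : ℕ) := by
    rw [le_div_iff₀ hk, mul_comm]; exact hC (k + 1)
  calc |gBinom α (k + 1)| / (c + (k + 1 : ℕ))
      ≤ C / (k + 1 : ℕ) / (k + 1 : ℕ) := by
        gcongr
        · exact (abs_nonneg _).trans hb
        · linarith
    _ = C * (1 / ((k + 1 : ℕ) : ℝ) ^ 2) := by ring

theorem integral_rpow_sub_one {a : ℝ} (ha : 0 < a) (T : ℝ) :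
    ∫ s in (0 : ℝ)..T, s ^ (a - 1) = T ^ a / a := by
  rw [integral_rpow (Or.inl (by linarith)), sub_add_cancel, Real.zero_rpow ha.ne', sub_zero]

theorem hasSum_betaInc {α c T : ℝ} (hα : 0 ≤ α) (hc : 0 < c) (hT0 : 0 ≤ T) (hT1 : T ≤ 1) :
    HasSum (fun k : ℕ => gBinom α k * (-1) ^ k * T ^ (c + k) / (c + k))
      (betaInc T c (α + 1)) := by
  set F : ℕ → ℝ → ℝ := fun k s => gBinom α k * (-1) ^ k * s ^ (c + k - 1)
  have hck : ∀ k : ℕ, 0 < c + k := fun k => by positivity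
  have hF_int : ∀ k, IntegrableOn (F k) (Set.Ioc 0 T) := fun k =>
    (intervalIntegrable_iff_integrableOn_Ioc_of_le hT0).1
      ((intervalIntegral.intervalIntegrable_rpow' (by linarith [hck k])).const_mul _)
  have hF_integral : ∀ k, ∫ s in Set.Ioc 0 T, F k s =
      gBinom α k * (-1) ^ k * T ^ (c + k) / (c + k) := fun k => by
    rw [← intervalIntegral.integral_of_le hT0, intervalIntegral.integral_const_mul,
      integral_rpow_sub_one (hck k), mul_div_assoc]
  have hF_norm : ∀ k,
      ∫ s in Set.Ioc 0 T, ‖F k s‖ = |gBinom α k| * (T ^ (c + k) / (c + k)) := by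
    intro k
    rw [← integral_rpow_sub_one (hck k), ← intervalIntegral.integral_const_mul,
      intervalIntegral.integral_of_le hT0]
    refine setIntegral_congr_fun measurableSet_Ioc fun s hs => ?_
    simp [F, abs_of_pos (Real.rpow_pos_of_pos hs.1 _)]
  have hsum : Summable fun k => ∫ s in Set.Ioc 0 T, ‖F k s‖ := by
    refine (summable_abs_gBinom_div hα hc).of_nonneg_of_le
      (fun k => integral_nonneg fun s => norm_nonneg _) fun k => ?_
    rw [hF_norm, ← mul_one_div |gBinom α k|]
    exact mul_le_mul_of_nonneg_left (div_le_div_of_nonneg_right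
      (Real.rpow_le_one hT0 hT1 (hck k).le) (hck k).le) (abs_nonneg _)
  have hpointwise : ∀ s ∈ Set.Ioo (0 : ℝ) 1,
      s ^ (c - 1) * (1 - s) ^ (α + 1 - 1) = ∑' k, F k s := by
    intro s hs
    have h := (hasSum_gBinom_mul_pow α (x := -s) (by rw [abs_neg, abs_of_pos hs.1]; exact hs.2))
    rw [← sub_eq_add_neg] at h
    rw [add_sub_cancel_right, ← h.tsum_eq, ← tsum_mul_left]
    refine tsum_congr fun k => ?_
    rw [show F k s = gBinom α k * (-1) ^ k * s ^ (c - 1 + k) by simp only [F]; ring_nf,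
      Real.rpow_add hs.1, Real.rpow_natCast, neg_pow]
    ring
  have hae : ∀ᵐ s ∂volume.restrict (Set.Ioc 0 T),
      s ^ (c - 1) * (1 - s) ^ (α + 1 - 1) = ∑' k, F k s := by
    rw [Measure.restrict_congr_set Ioo_ae_eq_Ioc.symm]
    filter_upwards [ae_restrict_mem measurableSet_Ioo] with s hs
    exact hpointwise s ⟨hs.1, hs.2.trans_le hT1⟩
  have := hasSum_integral_of_summable_integral_norm hF_int hsum
  simp only [hF_integral] at this
  rwa [← integral_congr_ae hae, ← intervalIntegral.integral_of_le hT0] at this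

theorem tsum_gBinom_mul_rpow_div {α d u : ℝ} (hα : 0 ≤ α) (hd : 0 < d) (hu0 : 0 ≤ u)
    (hu1 : u ≤ 1) :
    ∑' k : ℕ, gBinom α k * (-1) ^ k * u ^ (d + 2 * (k : ℝ)) / (d + 2 * k) =
      1 / 2 * betaInc (u ^ 2) (d / 2) (α + 1) := by
  rw [← (hasSum_betaInc hα (half_pos hd) (sq_nonneg u) (pow_le_one₀ hu0 hu1)).tsum_eq,
    ← tsum_mul_left]
  refine tsum_congr fun k => ?_
  rw [← Real.rpow_natCast_mul hu0,
    show ((2 : ℕ) : ℝ) * (d / 2 + k) = d + 2 * k by push_cast; ring]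
  have : d + 2 * (k : ℝ) ≠ 0 := by positivity
  field_simp

theorem Kfun_zero_left {α p t : ℝ} (hα : 0 ≤ α) (hp : 2 + 2 * α < p) (ht0 : 0 ≤ t)
    (ht1 : t ≤ 1) :
    Kfun α p 0 t = 1 / 2 * betaInc (t ^ 4) ((p - 2 * α - 2) / 2) (α + 1) := by
  rw [Kfun, max_eq_right (by simpa using sq_nonneg t),
    tsum_gBinom_mul_rpow_div hα (by linarith) (sq_nonneg t) (pow_le_one₀ ht0 ht1), ← pow_mul]

theorem Hfun_zero {α p : ℝ} (hα : 0 ≤ α) (hp : 2 + 2 * α < p) :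
    Hfun α p 0 = 1 / 2 * betaFn ((p - 2 * α - 2) / 2) (α + 1) - 1 / (2 * (α + 1)) := by
  have h := tsum_gBinom_mul_rpow_div (α := α) hα (by linarith : 0 < p - 2 * α - 2)
    zero_le_one le_rfl
  simp only [Real.one_rpow, mul_one, one_pow] at h
  rw [Hfun, h, zero_pow four_ne_zero, sub_zero, Real.one_rpow, mul_one]
  rfl

theorem betaFn_pos {x y : ℝ} (hx : 0 < x) (hy : 0 < y) : 0 < betaFn x y :=
  intervalIntegral.intervalIntegral_pos_of_pos_on (intervalIntegrable_betaIntegrand hx hy)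
    (fun t ht => by have := sub_pos.2 ht.2; have := ht.1; positivity) one_pos

theorem continuousOn_betaInc {x y : ℝ} (hx : 0 < x) (hy : 0 < y) :
    ContinuousOn (fun T => betaInc T x y) (Set.Icc 0 1) := by
  have := intervalIntegral.continuousOn_primitive_interval'
    (intervalIntegrable_betaIntegrand hx hy) Set.left_mem_uIcc
  rwa [Set.uIcc_of_le zero_le_one] at this

theorem hasDerivAt_betaInc {x y T : ℝ} (hx : 0 < x) (hy : 0 < y) (hT : T ∈ Set.Ioo 0 1) :
    HasDerivAt (fun T => betaInc T x y) (T ^ (x - 1) * (1 - T) ^ (y - 1)) T := by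
  refine intervalIntegral.integral_hasDerivAt_right
    ((intervalIntegrable_betaIntegrand hx hy).mono_set ?_)
    (Measurable.stronglyMeasurable (by fun_prop)).stronglyMeasurableAtFilter ?_
  · rw [Set.uIcc_of_le zero_le_one, Set.uIcc_of_le hT.1.le]
    exact Set.Icc_subset_Icc_right hT.2.le
  · have := sub_pos.2 hT.2
    exact (Real.continuousAt_rpow_const _ _ (Or.inl hT.1.ne')).mul
      ((Real.continuousAt_rpow_const _ _ (Or.inl this.ne')).comp (by fun_prop))

theorem hasDerivAt_betaInc_pow_four {c α t : ℝ} (hc : 0 < c) (hα : 0 ≤ α)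
    (ht : t ∈ Set.Ioo 0 1) :
    HasDerivAt (fun t => betaInc (t ^ 4) c (α + 1))
      (4 * (t ^ (4 * c - 1) * (1 - t ^ 4) ^ α)) t := by
  have ht4 : t ^ 4 ∈ Set.Ioo 0 1 := ⟨pow_pos ht.1 4, pow_lt_one₀ ht.1.le ht.2 four_ne_zero⟩
  refine (HasDerivAt.comp (h₂ := fun u => betaInc u c (α + 1)) (h := fun s : ℝ => s ^ 4) t
    (hasDerivAt_betaInc hc (by linarith : 0 < α + 1) ht4) (hasDerivAt_pow 4 t)).congr_deriv ?_
  have hpow : (t ^ 4) ^ (c - 1) * t ^ 3 = t ^ (4 * c - 1) := by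
    rw [← Real.rpow_natCast_mul ht.1.le, ← Real.rpow_natCast t 3, ← Real.rpow_add ht.1]
    push_cast; ring_nf
  rw [add_sub_cancel_right, ← hpow]
  push_cast
  ring

theorem integral_betaIntegrand_mul_betaInc_pow_four {x y c α : ℝ} (hx : 0 < x) (hy : 0 < y)
    (hc : 0 < c) (hα : 0 ≤ α) :
    ∫ t in (0 : ℝ)..1, t ^ (x - 1) * (1 - t) ^ (y - 1) * betaInc (t ^ 4) c (α + 1) =
      betaFn x y * betaFn c (α + 1) -
        4 * ∫ t in (0 : ℝ)..1, betaInc t x y * (t ^ (4 * c - 1) * (1 - t ^ 4) ^ α) := by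
  have hG : ContinuousOn (fun t : ℝ => betaInc (t ^ 4) c (α + 1)) (Set.Icc 0 1) :=
    (continuousOn_betaInc hc (by linarith)).comp (by fun_prop)
      fun t ht => ⟨pow_nonneg ht.1 4, pow_le_one₀ ht.1 ht.2⟩
  have hτ : IntervalIntegrable
      (fun t : ℝ => 4 * (t ^ (4 * c - 1) * (1 - t ^ 4) ^ α)) volume 0 1 :=
    ((intervalIntegral.intervalIntegrable_rpow' (by linarith)).mul_continuousOn
      (by fun_prop (disch := exact Or.inr hα))).const_mul 4
  have h := intervalIntegral.integral_mul_deriv_eq_deriv_mul_of_hasDeriv_right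
    (u := fun t => betaInc t x y) (v := fun t => betaInc (t ^ 4) c (α + 1))
    (by rw [Set.uIcc_of_le zero_le_one]; exact continuousOn_betaInc hx hy)
    (by rwa [Set.uIcc_of_le zero_le_one])
    (fun t ht => (hasDerivAt_betaInc hx hy (by simpa using ht)).hasDerivWithinAt)
    (fun t ht => (hasDerivAt_betaInc_pow_four hc hα (by simpa using ht)).hasDerivWithinAt)
    (intervalIntegrable_betaIntegrand hx hy) hτ
  have hF0 : betaInc 0 x y = 0 := intervalIntegral.integral_same
  simp only [mul_left_comm _ (4 : ℝ), intervalIntegral.integral_const_mul, one_pow, hF0,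
    zero_mul, sub_zero] at h
  change _ = betaInc 1 x y * betaInc 1 c (α + 1) - _
  linarith

theorem integral_betaReg_mul_mul (x y : ℝ) (f g : ℝ → ℝ) :
    ∫ t in (0 : ℝ)..1, betaReg t x y * f t * g t =
      (∫ t in (0 : ℝ)..1, betaInc t x y * (f t * g t)) / betaFn x y := by
  rw [← intervalIntegral.integral_div]
  exact intervalIntegral.integral_congr fun t _ => by rw [betaReg]; ring

section

variable {α p : ℝ}

theorem integral_psiFn_mul_Kfun_zero_left (hα : 0 ≤ α) (hp : 2 + 2 * α < p) :
    ∫ t in (0 : ℝ)..1, psiFn α p t * Kfun α p 0 t = 1 / 2 *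
      ∫ t in (0 : ℝ)..1, psiFn α p t * betaInc (t ^ 4) ((p - 2 * α - 2) / 2) (α + 1) := by
  rw [← intervalIntegral.integral_const_mul]
  refine intervalIntegral.integral_congr fun t ht => ?_
  rw [Set.uIcc_of_le zero_le_one] at ht
  simp only [Kfun_zero_left hα hp ht.1 ht.2]
  ring

theorem integral_psiFn_mul_betaInc_pow_four (hα : 0 ≤ α) (hp : 2 + 2 * α < p) :
    ∫ t in (0 : ℝ)..1, psiFn α p t * betaInc (t ^ 4) ((p - 2 * α - 2) / 2) (α + 1) =
      betaFn ((2 + α) / p) (1 - (2 + α) / p) * betaFn ((p - 2 * α - 2) / 2) (α + 1) -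
        4 * ∫ t in (0 : ℝ)..1, betaInc t ((2 + α) / p) (1 - (2 + α) / p) *
          (t ^ (2 * p - 4 * α - 5) * (1 - t ^ 4) ^ α) := by
  have hp0 : 0 < p := by linarith
  have hx : 0 < (2 + α) / p := by positivity
  have hy : 0 < 1 - (2 + α) / p := sub_pos.2 ((div_lt_one hp0).2 (by linarith))
  have h4c : 4 * ((p - 2 * α - 2) / 2) - 1 = 2 * p - 4 * α - 5 := by ring
  simpa only [psiFn, sub_sub_cancel_left, h4c] using
    integral_betaIntegrand_mul_betaInc_pow_four hx hy (by linarith : 0 < (p - 2 * α - 2) / 2) hα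

end

theorem sub_half_mul_sub_nonpos_iff {a B B₂ I : ℝ} (ha : a ≠ 0) (hB : 0 < B) :
    B * (1 / 2 * B₂ - 1 / (2 * a)) - 1 / 2 * (B * B₂ - 4 * I) ≤ 0 ↔
      I / B - 1 / (4 * a) ≤ 0 := by
  have h : B * (1 / 2 * B₂ - 1 / (2 * a)) - 1 / 2 * (B * B₂ - 4 * I) =
      2 * B * (I / B - 1 / (4 * a)) := by
    field_simp
    ring
  rw [h]
  simpa only [mul_zero] using mul_le_mul_iff_of_pos_left (c := 0) (by positivity : 0 < 2 * B)

theorem condition_equivalences_general (α p : ℝ) (hα : 0 ≤ α)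
    (hp1 : 2 + 2 * α < p) :
    ((betaFn ((2 + α) / p) (1 - (2 + α) / p) * Hfun α p 0
        - (∫ t in (0:ℝ)..1, psiFn α p t * Kfun α p 0 t) ≤ 0) ↔
      (betaFn ((2 + α) / p) (1 - (2 + α) / p) *
          (1 / 2 * betaFn ((p - 2 * α - 2) / 2) (α + 1) - 1 / (2 * (α + 1)))
        - 1 / 2 * (∫ t in (0:ℝ)..1,
            psiFn α p t * betaInc (t ^ 4) ((p - 2 * α - 2) / 2) (α + 1)) ≤ 0)) ∧
    ((betaFn ((2 + α) / p) (1 - (2 + α) / p) *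
          (1 / 2 * betaFn ((p - 2 * α - 2) / 2) (α + 1) - 1 / (2 * (α + 1)))
        - 1 / 2 * (∫ t in (0:ℝ)..1,
            psiFn α p t * betaInc (t ^ 4) ((p - 2 * α - 2) / 2) (α + 1)) ≤ 0) ↔
      ((∫ t in (0:ℝ)..1, betaReg t ((2 + α) / p) (1 - (2 + α) / p) *
            t ^ (2 * p - 4 * α - 5) * (1 - t ^ 4) ^ α)
        - 1 / (4 * (α + 1)) ≤ 0)) := by
  have hp : 0 < p := by linarith
  refine ⟨by rw [Hfun_zero hα hp1, integral_psiFn_mul_Kfun_zero_left hα hp1], ?_⟩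
  rw [integral_psiFn_mul_betaInc_pow_four hα hp1, integral_betaReg_mul_mul]
  have hx : 0 < (2 + α) / p := by positivity
  have hy : 0 < 1 - (2 + α) / p := sub_pos.2 ((div_lt_one hp).2 (by linarith))
  exact sub_half_mul_sub_nonpos_iff (by linarith) (betaFn_pos hx hy)

theorem condition_equivalences (α p : ℝ) (hα : 0 ≤ α)
    (hp1 : 2 + 2 * α < p) (hp2 : p < 2 * (2 + α)) :
    ((betaFn ((2 + α) / p) (1 - (2 + α) / p) * Hfun α p 0
        - (∫ t in (0:ℝ)..1, psiFn α p t * Kfun α p 0 t) ≤ 0) ↔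
      (betaFn ((2 + α) / p) (1 - (2 + α) / p) *
          (1 / 2 * betaFn ((p - 2 * α - 2) / 2) (α + 1) - 1 / (2 * (α + 1)))
        - 1 / 2 * (∫ t in (0:ℝ)..1,
            psiFn α p t * betaInc (t ^ 4) ((p - 2 * α - 2) / 2) (α + 1)) ≤ 0)) ∧
    ((betaFn ((2 + α) / p) (1 - (2 + α) / p) *
          (1 / 2 * betaFn ((p - 2 * α - 2) / 2) (α + 1) - 1 / (2 * (α + 1)))
        - 1 / 2 * (∫ t in (0:ℝ)..1,
            psiFn α p t * betaInc (t ^ 4) ((p - 2 * α - 2) / 2) (α + 1)) ≤ 0) ↔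
      ((∫ t in (0:ℝ)..1, betaReg t ((2 + α) / p) (1 - (2 + α) / p) *
            t ^ (2 * p - 4 * α - 5) * (1 - t ^ 4) ^ α)
        - 1 / (4 * (α + 1)) ≤ 0)) :=
  condition_equivalences_general α p hα hp1
end

section
/- Let x ≥ 1 and 0 < y ≤ 1. Then B(x,y) ≤ 1/x + 1/y − 1. -/
open MeasureTheory intervalIntegral

/-! For `0 < t < 1` put `a = t^(x-1) ≤ 1` and `b = (1-t)^(y-1) ≥ 1`; then `(1 - a)(b - 1) ≥ 0`,
i.e. `ab ≤ a + b - 1`. Integrating over `[0,1]` gives `B(x,y) ≤ 1/x + 1/y - 1`. -/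

theorem mul_le_add_sub_one_of_le_one_of_one_le {a b : ℝ} (ha : a ≤ 1) (hb : 1 ≤ b) :
    a * b ≤ a + b - 1 := by
  nlinarith [mul_nonneg (sub_nonneg.2 ha) (sub_nonneg.2 hb)]

theorem integral_rpow_sub_one_zero_one {r : ℝ} (hr : 0 < r) :
    ∫ t in (0:ℝ)..1, t ^ (r - 1) = 1 / r := by
  rw [integral_rpow (Or.inl (by linarith)), sub_add_cancel, Real.one_rpow,
    Real.zero_rpow hr.ne', sub_zero]

theorem integral_one_sub_rpow_sub_one {r : ℝ} (hr : 0 < r) :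
    ∫ t in (0:ℝ)..1, (1 - t) ^ (r - 1) = 1 / r := by
  rw [integral_comp_sub_left (fun t => t ^ (r - 1)), sub_self, sub_zero,
    integral_rpow_sub_one_zero_one hr]

theorem intervalIntegrable_one_sub_rpow {r : ℝ} (hr : -1 < r) :
    IntervalIntegrable (fun t : ℝ => (1 - t) ^ r) volume 0 1 := by
  simpa using ((intervalIntegrable_rpow' hr (a := 0) (b := 1)).comp_sub_left 1).symm

theorem intervalIntegrable_rpow_mul_one_sub_rpow {a b : ℝ} (ha : 0 ≤ a) (hb : -1 < b) :
    IntervalIntegrable (fun t : ℝ => t ^ a * (1 - t) ^ b) volume 0 1 :=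
  (intervalIntegrable_one_sub_rpow hb).continuousOn_mul (Real.continuous_rpow_const ha).continuousOn

theorem rpow_mul_one_sub_rpow_le {a b t : ℝ} (ha : 0 ≤ a) (hb : b ≤ 0) (ht : t ∈ Set.Ioo 0 1) :
    t ^ a * (1 - t) ^ b ≤ t ^ a + (1 - t) ^ b - 1 :=
  mul_le_add_sub_one_of_le_one_of_one_le (Real.rpow_le_one ht.1.le ht.2.le ha)
    (Real.one_le_rpow_of_pos_of_le_one_of_nonpos (by linarith [ht.2]) (by linarith [ht.1]) hb)

theorem beta_upper_bound (x y : ℝ) (hx : 1 ≤ x) (hy0 : 0 < y) (hy1 : y ≤ 1) :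
    betaFn x y ≤ 1 / x + 1 / y - 1 := by
  have hf : IntervalIntegrable (fun t : ℝ => t ^ (x - 1)) volume 0 1 :=
    intervalIntegrable_rpow' (by linarith)
  have hg : IntervalIntegrable (fun t : ℝ => (1 - t) ^ (y - 1)) volume 0 1 :=
    intervalIntegrable_one_sub_rpow (by linarith)
  calc betaFn x y ≤ ∫ t in (0:ℝ)..1, (t ^ (x - 1) + (1 - t) ^ (y - 1) - 1) :=
        integral_mono_on_of_le_Ioo zero_le_one
          (intervalIntegrable_rpow_mul_one_sub_rpow (by linarith) (by linarith))
          ((hf.add hg).sub intervalIntegrable_const)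
          fun t ht => rpow_mul_one_sub_rpow_le (by linarith) (by linarith) ht
    _ = 1 / x + 1 / y - 1 := by
      rw [integral_sub (hf.add hg) intervalIntegrable_const, integral_add hf hg,
        integral_rpow_sub_one_zero_one (by linarith), integral_one_sub_rpow_sub_one hy0]
      simp
end

section
/- Let x ≥ 1 and 0 < y ≤ 1. Then B(x,y) ≥ (1/(xy)) · (x+y)/(1+xy). -/
open MeasureTheory intervalIntegral

/-! For `a ∈ [0,1]` and `y ∈ [0,1]`, `(1-t)^y` lies below its second-order Taylor polynomial
`Q(t) = 1 - y t - y(1-y) t²/2` on `[0,1]`, so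
`t^a (1-t)^y ≥ (1-t)^y - (1 - t^a) Q(t)`; integrating gives
`B(a+1, y+1) ≥ 1/((1+a)(1+(1+a)y))` after a polynomial inequality. With
`B(x,y) = (x+y)/y · B(x,y+1)` this is the claim for `x ∈ [1,2]`, and the recursion
`B(x+1,y) = x/(x+y) · B(x,y)` carries it from `x` to `x+1`. -/

open Set Real

theorem one_add_mul_le_one_sub_rpow_sub_one {t y : ℝ} (ht : t < 1)
    (hy0 : 0 ≤ y) (hy1 : y ≤ 1) : 1 + (1 - y) * t ≤ (1 - t) ^ (y - 1) := by
  have hbern : (1 - t) ^ (1 - y) ≤ 1 - (1 - y) * t := by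
    simpa [← sub_eq_add_neg] using
      rpow_one_add_le_one_add_mul_self (s := -t) (by linarith) (by linarith : 0 ≤ 1 - y)
        (by linarith)
  have hpos : 0 < (1 - t) ^ (1 - y) := rpow_pos_of_pos (by linarith) _
  calc 1 + (1 - y) * t ≤ (1 - (1 - y) * t)⁻¹ := by
        rw [← one_div, le_div_iff₀ (by nlinarith)]
        nlinarith [sq_nonneg ((1 - y) * t)]
    _ ≤ ((1 - t) ^ (1 - y))⁻¹ := inv_anti₀ hpos hbern
    _ = (1 - t) ^ (y - 1) := by rw [← rpow_neg (by linarith), neg_sub]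

theorem one_sub_rpow_le_quadratic {y t : ℝ} (hy0 : 0 ≤ y) (hy1 : y ≤ 1)
    (ht : t ∈ Icc (0 : ℝ) 1) :
    (1 - t) ^ y ≤ 1 - y * t - y * (1 - y) / 2 * t ^ 2 := by
  let F : ℝ → ℝ := fun t => 1 - y * t - y * (1 - y) / 2 * t ^ 2 - (1 - t) ^ y
  have hF' : ∀ s ∈ Ioo (0 : ℝ) 1,
      HasDerivAt F (y * ((1 - s) ^ (y - 1) - (1 + (1 - y) * s))) s := by
    intro s hs
    have hQ := (((hasDerivAt_id' s).const_mul y).const_sub 1).sub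
      ((hasDerivAt_pow 2 s).const_mul (y * (1 - y) / 2))
    have hR := ((hasDerivAt_id' s).const_sub 1).rpow_const (p := y)
      (.inl (sub_ne_zero.mpr hs.2.ne'))
    refine (hQ.sub hR).congr_deriv ?_
    push_cast
    ring
  have hmono : MonotoneOn F (Icc 0 1) := by
    refine monotoneOn_of_hasDerivWithinAt_nonneg
      (f' := fun s => y * ((1 - s) ^ (y - 1) - (1 + (1 - y) * s))) (convex_Icc 0 1)
      (by fun_prop) (fun s hs => ?_) (fun s hs => ?_)
    · rw [interior_Icc] at hs ⊢
      exact (hF' s hs).hasDerivWithinAt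
    · rw [interior_Icc] at hs
      exact mul_nonneg hy0 (sub_nonneg.mpr (one_add_mul_le_one_sub_rpow_sub_one hs.2 hy0 hy1))
  simpa [F] using hmono ⟨le_rfl, zero_le_one⟩ ht ht.1

theorem integral_one_sub_rpow {y : ℝ} (hy : -1 < y) :
    ∫ t in (0 : ℝ)..1, (1 - t) ^ y = 1 / (y + 1) := by
  rw [intervalIntegral.integral_comp_sub_left (fun t => t ^ y), sub_self, sub_zero,
    integral_rpow (.inl hy), one_rpow, zero_rpow (by linarith)]
  ring

theorem integral_rpow_mul_quadratic {a : ℝ} (ha : -1 < a) (b c : ℝ) :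
    ∫ t in (0 : ℝ)..1, t ^ a * (1 - b * t - c * t ^ 2) =
      1 / (a + 1) - b / (a + 2) - c / (a + 3) := by
  have hn (n : ℕ) : -1 < a + n := by linarith [n.cast_nonneg (α := ℝ)]
  have hpow (n : ℕ) : ∫ t in (0 : ℝ)..1, t ^ (a + n) = 1 / (a + n + 1) := by
    rw [integral_rpow (.inl (hn n)), one_rpow, zero_rpow (by linarith [hn n])]
    ring
  have hint (n : ℕ) : IntervalIntegrable (fun t : ℝ => t ^ (a + n)) volume 0 1 :=
    intervalIntegrable_rpow' (hn n)
  have hexpand : EqOn (fun t : ℝ => t ^ a * (1 - b * t - c * t ^ 2))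
      (fun t => t ^ (a + (0 : ℕ)) - b * t ^ (a + (1 : ℕ)) - c * t ^ (a + (2 : ℕ)))
      (uIcc 0 1) := by
    intro t ht
    rw [uIcc_of_le zero_le_one] at ht
    dsimp only
    rw [Nat.cast_zero, add_zero, rpow_add_natCast' (n := 1) ht.1 (by push_cast; linarith),
      rpow_add_natCast' (n := 2) ht.1 (by push_cast; linarith)]
    ring
  rw [intervalIntegral.integral_congr hexpand,
    intervalIntegral.integral_sub ((hint 0).sub ((hint 1).const_mul b)) ((hint 2).const_mul c),
    intervalIntegral.integral_sub (hint 0) ((hint 1).const_mul b),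
    intervalIntegral.integral_const_mul, intervalIntegral.integral_const_mul, hpow, hpow, hpow]
  push_cast
  ring

/-- The right-hand side is `∫₀¹ ((1-t)^y - (1-t^a)(1 - y t - y(1-y) t²/2)) dt`. -/
theorem one_div_le_envelope_integral {a y : ℝ} (ha0 : 0 ≤ a) (ha1 : a ≤ 1) (hy0 : 0 ≤ y)
    (hy1 : y ≤ 1) :
    1 / ((1 + a) * (1 + (1 + a) * y)) ≤
      1 / (y + 1) - (1 - y / 2 - y * (1 - y) / 2 / 3)
        + (1 / (a + 1) - y / (a + 2) - y * (1 - y) / 2 / (a + 3)) := by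
  have hS : 0 ≤ 11 - 5 * y + 2 * y ^ 2 + 15 * a - 13 * a * y + 5 * a * y ^ 2 + 4 * a ^ 2
      - 10 * a ^ 2 * y + 4 * a ^ 2 * y ^ 2 - 2 * a ^ 3 * y + a ^ 3 * y ^ 2 := by
    have ha2 : a ^ 2 ≤ a := by nlinarith
    have ha3 : a ^ 3 ≤ a := by nlinarith
    nlinarith [mul_le_mul_of_nonneg_left hy1 ha0, mul_le_mul_of_nonneg_left hy1 (sq_nonneg a),
      mul_le_mul_of_nonneg_left hy1 (pow_nonneg ha0 3), mul_nonneg ha0 (sq_nonneg y),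
      mul_nonneg (sq_nonneg a) (sq_nonneg y), mul_nonneg (pow_nonneg ha0 3) (sq_nonneg y)]
  have hdiff : 1 / (y + 1) - (1 - y / 2 - y * (1 - y) / 2 / 3)
        + (1 / (a + 1) - y / (a + 2) - y * (1 - y) / 2 / (a + 3))
        - 1 / ((1 + a) * (1 + (1 + a) * y))
      = a * y * (1 - y) * (11 - 5 * y + 2 * y ^ 2 + 15 * a - 13 * a * y + 5 * a * y ^ 2
          + 4 * a ^ 2 - 10 * a ^ 2 * y + 4 * a ^ 2 * y ^ 2 - 2 * a ^ 3 * y + a ^ 3 * y ^ 2)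
        / (6 * (y + 1) * (a + 1) * (a + 2) * (a + 3) * (1 + (1 + a) * y)) := by
    field_simp
    ring
  rw [← sub_nonneg, hdiff]
  exact div_nonneg (mul_nonneg (mul_nonneg (mul_nonneg ha0 hy0) (sub_nonneg.2 hy1)) hS)
    (by positivity)

theorem one_div_le_integral_rpow_mul_one_sub_rpow {a y : ℝ} (ha0 : 0 ≤ a) (ha1 : a ≤ 1)
    (hy0 : 0 ≤ y) (hy1 : y ≤ 1) :
    1 / ((1 + a) * (1 + (1 + a) * y)) ≤ ∫ t in (0 : ℝ)..1, t ^ a * (1 - t) ^ y := by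
  let Q : ℝ → ℝ := fun t => 1 - y * t - y * (1 - y) / 2 * t ^ 2
  have hQ : ∫ t in (0 : ℝ)..1, Q t = 1 - y / 2 - y * (1 - y) / 2 / 3 := by
    simpa using integral_rpow_mul_quadratic (a := 0) (by norm_num) y (y * (1 - y) / 2)
  have hQa := integral_rpow_mul_quadratic (by linarith : -1 < a) y (y * (1 - y) / 2)
  have hcont_a : Continuous fun t : ℝ => t ^ a := continuous_rpow_const ha0
  have hcont_y : Continuous fun t : ℝ => (1 - t) ^ y := by fun_prop
  have hint_y : IntervalIntegrable (fun t : ℝ => (1 - t) ^ y) volume 0 1 :=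
    hcont_y.intervalIntegrable 0 1
  have hcont_Q : Continuous Q := by fun_prop
  have hint_Q : IntervalIntegrable Q volume 0 1 := hcont_Q.intervalIntegrable 0 1
  have hint_aQ : IntervalIntegrable (fun t => t ^ a * Q t) volume 0 1 :=
    (hcont_a.mul hcont_Q).intervalIntegrable 0 1
  calc 1 / ((1 + a) * (1 + (1 + a) * y))
      ≤ 1 / (y + 1) - (1 - y / 2 - y * (1 - y) / 2 / 3)
        + (1 / (a + 1) - y / (a + 2) - y * (1 - y) / 2 / (a + 3)) :=
        one_div_le_envelope_integral ha0 ha1 hy0 hy1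
    _ = ∫ t in (0 : ℝ)..1, ((1 - t) ^ y - Q t + t ^ a * Q t) := by
        rw [intervalIntegral.integral_add (hint_y.sub hint_Q) hint_aQ,
          intervalIntegral.integral_sub hint_y hint_Q, integral_one_sub_rpow (by linarith), hQ,
          hQa]
    _ ≤ ∫ t in (0 : ℝ)..1, t ^ a * (1 - t) ^ y := by
        refine intervalIntegral.integral_mono_on zero_le_one ((hint_y.sub hint_Q).add hint_aQ)
          ((hcont_a.mul hcont_y).intervalIntegrable 0 1) fun t ht => ?_
        simp only [Q]
        nlinarith [mul_nonneg (sub_nonneg.2 (rpow_le_one ht.1 ht.2 ha0))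
          (sub_nonneg.2 (one_sub_rpow_le_quadratic hy0 hy1 ht))]

theorem betaFn_eq_Gamma_mul_Gamma_div {x y : ℝ} (hx : 0 < x) (hy : 0 < y) :
    betaFn x y = Gamma x * Gamma y / Gamma (x + y) := by
  apply Complex.ofReal_injective
  have hint : (betaFn x y : ℂ) = Complex.betaIntegral x y := by
    rw [betaFn, Complex.betaIntegral, ← intervalIntegral.integral_ofReal]
    refine intervalIntegral.integral_congr fun t ht => ?_
    rw [uIcc_of_le zero_le_one] at ht
    push_cast
    rw [Complex.ofReal_cpow ht.1, Complex.ofReal_cpow (by linarith [ht.2])]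
    push_cast
    ring
  rw [hint, Complex.betaIntegral_eq_Gamma_mul_div _ _ (by simpa) (by simpa),
    ← Complex.ofReal_add]
  simp only [Complex.Gamma_ofReal, Complex.ofReal_mul, Complex.ofReal_div]

theorem betaFn_add_one_left {x y : ℝ} (hx : 0 < x) (hy : 0 < y) :
    betaFn (x + 1) y = x / (x + y) * betaFn x y := by
  rw [betaFn_eq_Gamma_mul_Gamma_div (by linarith) hy, betaFn_eq_Gamma_mul_Gamma_div hx hy,
    add_right_comm, Gamma_add_one hx.ne', Gamma_add_one (by linarith)]
  have := (Gamma_pos_of_pos (add_pos hx hy)).ne'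
  field_simp

theorem betaFn_add_one_right {x y : ℝ} (hx : 0 < x) (hy : 0 < y) :
    betaFn x (y + 1) = y / (x + y) * betaFn x y := by
  rw [betaFn_eq_Gamma_mul_Gamma_div hx (by linarith), betaFn_eq_Gamma_mul_Gamma_div hx hy,
    ← add_assoc, Gamma_add_one hy.ne', Gamma_add_one (by linarith)]
  have := (Gamma_pos_of_pos (add_pos hx hy)).ne'
  field_simp

theorem one_div_le_betaFn_add_one_right {x y : ℝ} (hx1 : 1 ≤ x) (hx2 : x ≤ 2) (hy0 : 0 ≤ y)
    (hy1 : y ≤ 1) : 1 / (x * (1 + x * y)) ≤ betaFn x (y + 1) := by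
  simpa [betaFn] using
    one_div_le_integral_rpow_mul_one_sub_rpow (a := x - 1) (by linarith) (by linarith) hy0 hy1

theorem le_betaFn_of_le_two {x y : ℝ} (hx1 : 1 ≤ x) (hx2 : x ≤ 2) (hy0 : 0 < y)
    (hy1 : y ≤ 1) :
    1 / (x * y) * ((x + y) / (1 + x * y)) ≤ betaFn x y := by
  have hx0 : 0 < x := by linarith
  calc 1 / (x * y) * ((x + y) / (1 + x * y)) = (x + y) / y * (1 / (x * (1 + x * y))) := by
        field_simp
    _ ≤ (x + y) / y * betaFn x (y + 1) := by
        gcongr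
        exact one_div_le_betaFn_add_one_right hx1 hx2 hy0.le hy1
    _ = betaFn x y := by
        rw [betaFn_add_one_right hx0 hy0]
        field_simp

theorem le_betaFn_add_one_left {x y : ℝ} (hx : 0 < x) (hy0 : 0 < y) (hy1 : y ≤ 1)
    (h : 1 / (x * y) * ((x + y) / (1 + x * y)) ≤ betaFn x y) :
    1 / ((x + 1) * y) * ((x + 1 + y) / (1 + (x + 1) * y)) ≤ betaFn (x + 1) y := by
  calc 1 / ((x + 1) * y) * ((x + 1 + y) / (1 + (x + 1) * y)) ≤ 1 / (y * (1 + x * y)) := by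
        rw [div_mul_div_comm, one_mul, div_le_div_iff₀ (by positivity) (by positivity)]
        nlinarith [mul_nonneg (mul_nonneg hx.le hy0.le) (sub_nonneg.2 hy1)]
    _ = x / (x + y) * (1 / (x * y) * ((x + y) / (1 + x * y))) := by
        field_simp
    _ ≤ x / (x + y) * betaFn x y := by gcongr
    _ = betaFn (x + 1) y := (betaFn_add_one_left hx hy0).symm

theorem beta_lower_bound (x y : ℝ) (hx : 1 ≤ x) (hy0 : 0 < y) (hy1 : y ≤ 1) :
    betaFn x y ≥ 1 / (x * y) * ((x + y) / (1 + x * y)) := by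
  obtain ⟨n, hn⟩ : ∃ n : ℕ, x ≤ n + 2 := ⟨⌈x⌉₊, by linarith [Nat.le_ceil x]⟩
  induction n generalizing x with
  | zero => exact le_betaFn_of_le_two hx (by simpa using hn) hy0 hy1
  | succ n ih =>
    rcases le_or_gt x 2 with hx2 | hx2
    · exact le_betaFn_of_le_two hx hx2 hy0 hy1
    · have hprev := ih (x - 1) (by linarith) (by push_cast at hn; linarith)
      simpa using le_betaFn_add_one_left (by linarith) hy0 hy1 hprev
end

section
/- Let α ∈ [0,1] or α ∈ [2,3], and let t ∈ [0,1]. Then (1−t)^α ≤ 1 − αt + (α(α−1)/2) t². -/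
open MeasureTheory intervalIntegral

/-! For `f s = (1 - s) ^ α` one has `f'' s = α (α - 1) (1 - s) ^ (α - 2) ≤ α (α - 1) = f'' 0` on
`[0, 1)` precisely when `α ∈ [0, 1] ∪ [2, ∞)`, and a second derivative bounded by `C` keeps a
function below its tangent line plus `C (x - a)² / 2`. -/

open Set

/-- `g x = f a + f' a (x - a) + C (x - a)² / 2 - f x` has `g a = g' a = 0` and `g'' = C - f'' ≥ 0`,
so `g'` and then `g` are monotone on `[a, b]`. -/
theorem image_le_of_second_deriv_le {f f' f'' : ℝ → ℝ} {a b C : ℝ} (hab : a ≤ b)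
    (hf : ContinuousOn f (Icc a b)) (hf' : ∀ x ∈ Ico a b, HasDerivAt f (f' x) x)
    (hf'' : ∀ x ∈ Ico a b, HasDerivAt f' (f'' x) x) (hC : ∀ x ∈ Ioo a b, f'' x ≤ C) :
    f b ≤ f a + f' a * (b - a) + C / 2 * (b - a) ^ 2 := by
  set g : ℝ → ℝ := fun x => f a + f' a * (x - a) + C / 2 * (x - a) ^ 2 - f x
  set g' : ℝ → ℝ := fun x => f' a + C * (x - a) - f' x
  have hg : ∀ x ∈ Ico a b, HasDerivAt g (g' x) x := fun x hx => by
    have := ((((hasDerivAt_id x).sub_const a).const_mul (f' a)).const_add (f a)).add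
      (((hasDerivAt_id x).sub_const a).pow 2 |>.const_mul (C / 2)) |>.sub (hf' x hx)
    exact this.congr_deriv (by simp only [id, g']; ring)
  have hg' : ∀ x ∈ Ico a b, HasDerivAt g' (C - f'' x) x := fun x hx => by
    have := ((((hasDerivAt_id x).sub_const a).const_mul C).const_add (f' a)).sub (hf'' x hx)
    exact this.congr_deriv (by ring)
  have hg'_mono : MonotoneOn g' (Ico a b) := by
    refine monotoneOn_of_hasDerivWithinAt_nonneg (f' := fun x => C - f'' x) (convex_Ico a b)
      (fun x hx => (hg' x hx).continuousAt.continuousWithinAt) (fun x hx => ?_) (fun x hx => ?_)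
    all_goals rw [interior_Ico] at hx
    · exact (hg' x (Ioo_subset_Ico_self hx)).hasDerivWithinAt
    · exact sub_nonneg.2 (hC x hx)
  have hg'_nonneg : ∀ x ∈ Ico a b, 0 ≤ g' x := fun x hx => by
    simpa [g'] using hg'_mono (left_mem_Ico.2 (hx.1.trans_lt hx.2)) hx hx.1
  have hg_mono : MonotoneOn g (Icc a b) := by
    refine monotoneOn_of_hasDerivWithinAt_nonneg (f' := g') (convex_Icc a b)
      (by fun_prop) (fun x hx => ?_) (fun x hx => ?_)
    all_goals rw [interior_Icc] at hx
    · exact (hg x (Ioo_subset_Ico_self hx)).hasDerivWithinAt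
    · exact hg'_nonneg x (Ioo_subset_Ico_self hx)
  have := hg_mono (left_mem_Icc.2 hab) (right_mem_Icc.2 hab) hab
  simp only [g, sub_self] at this
  linarith

theorem hasDerivAt_one_sub_rpow {x : ℝ} (p : ℝ) (hx : x < 1) :
    HasDerivAt (fun y => (1 - y) ^ p) (-(p * (1 - x) ^ (p - 1))) x := by
  simpa using ((hasDerivAt_id x).const_sub 1).rpow_const (p := p) (.inl (sub_ne_zero.2 hx.ne'))

theorem mul_sub_one_mul_rpow_sub_two_le {α x : ℝ} (hα : α ∈ Icc (0 : ℝ) 1 ∨ 2 ≤ α)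
    (hx₀ : 0 < x) (hx₁ : x ≤ 1) : α * (α - 1) * x ^ (α - 2) ≤ α * (α - 1) := by
  rcases hα with ⟨hα₀, hα₁⟩ | hα₂
  · have : 1 ≤ x ^ (α - 2) := Real.one_le_rpow_of_pos_of_le_one_of_nonpos hx₀ hx₁ (by linarith)
    nlinarith [mul_nonneg hα₀ (sub_nonneg.2 hα₁)]
  · have : x ^ (α - 2) ≤ 1 := Real.rpow_le_one hx₀.le hx₁ (by linarith)
    nlinarith [mul_nonneg (by linarith : (0 : ℝ) ≤ α) (by linarith : (0 : ℝ) ≤ α - 1)]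

theorem rpow_le_taylor_two (α t : ℝ)
    (hα : α ∈ Set.Icc (0:ℝ) 1 ∨ α ∈ Set.Icc (2:ℝ) 3) (ht : t ∈ Set.Icc (0:ℝ) 1) :
    (1 - t) ^ α ≤ 1 - α * t + (α * (α - 1) / 2) * t ^ 2 := by
  have hα' : α ∈ Icc (0 : ℝ) 1 ∨ 2 ≤ α := hα.imp_right (·.1)
  have hα₀ : 0 ≤ α := by rcases hα with h | h <;> linarith [h.1]
  have key := image_le_of_second_deriv_le (f := fun s => (1 - s) ^ α)
    (f' := fun s => -(α * (1 - s) ^ (α - 1))) (f'' := fun s => α * (α - 1) * (1 - s) ^ (α - 2))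
    (C := α * (α - 1)) ht.1
    ((Real.continuous_rpow_const hα₀).comp (continuous_sub_left 1)).continuousOn
    (fun s hs => hasDerivAt_one_sub_rpow α (hs.2.trans_le ht.2))
    (fun s hs =>
      ((hasDerivAt_one_sub_rpow (α - 1) (hs.2.trans_le ht.2)).const_mul α).neg.congr_deriv
        (by ring_nf))
    (fun s hs => mul_sub_one_mul_rpow_sub_two_le hα' (sub_pos.2 (hs.2.trans_le ht.2))
      (by linarith [hs.1]))
  simp only [sub_zero, Real.one_rpow] at key
  linarith
end
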